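/- Let m, n, k be positive integers with k ≤ n, let X ∈ M_m ⊗ M_n, and let A_1,…,A_N, B_1,…,B_N ∈ M_{k,n} satisfy ∑_{i=1}^N A_i A_i^* ≤ I_k and ∑_{i=1}^N B_i B_i^* ≤ I_k (in the positive semidefinite ordering). Then ‖∑_{i=1}^N (I_m ⊗ A_i) X (I_m ⊗ B_i^*)‖ ≤ ‖X‖_{S(k)}. (This is the '≤' direction in the proof of Theorem 3.1.) -/

import Mathlib

open scoped ComplexOrder Kronecker
open Matrix

noncomputable section

/-- The standard inner product `⟨v, w⟩ = ∑ conj(vᵢ) wᵢ` on `I → ℂ`. -/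
def inprod {I : Type*} [Fintype I] (v w : I → ℂ) : ℂ :=
  ∑ i, (starRingEnd ℂ) (v i) * w i

/-- `v` is a unit vector. -/
def UnitVec {I : Type*} [Fintype I] (v : I → ℂ) : Prop :=
  inprod v v = 1

/-- The Schmidt rank of a vector in `ℂ^I ⊗ ℂ^J`, i.e. the rank of the associated
`I × J` coefficient matrix. -/
noncomputable def SchmidtRank {I J : Type*} [Fintype I] [Fintype J] (v : I × J → ℂ) : ℕ :=
  (Matrix.of fun i j => v (i, j)).rank

/-- The operator norm (largest singular value) of a matrix, as
`sup { |⟨v, A w⟩| : v, w unit vectors }`. -/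
noncomputable def opNorm {I J : Type*} [Fintype I] [Fintype J] (A : Matrix I J ℂ) : ℝ :=
  sSup { t : ℝ | ∃ v w, UnitVec v ∧ UnitVec w ∧ t = ‖inprod v (A.mulVec w)‖ }

/-- The `S(k)`-norm of `X ∈ M_I ⊗ M_J`. -/
noncomputable def SNorm {I J : Type*} [Fintype I] [Fintype J] (k : ℕ)
    (X : Matrix (I × J) (I × J) ℂ) : ℝ :=
  sSup { t : ℝ | ∃ v w : I × J → ℂ, UnitVec v ∧ UnitVec w ∧
    SchmidtRank v ≤ k ∧ SchmidtRank w ≤ k ∧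
    t = ‖inprod v (X.mulVec w)‖ }

/-- `X` is a `k`-block positive (Hermitian) operator: `⟨v, X v⟩ ≥ 0` for every
vector of Schmidt rank at most `k`. -/
def kBlockPos {I J : Type*} [Fintype I] [Fintype J] (k : ℕ)
    (X : Matrix (I × J) (I × J) ℂ) : Prop :=
  X.IsHermitian ∧ ∀ v : I × J → ℂ, SchmidtRank v ≤ k → 0 ≤ inprod v (X.mulVec v)

/-- `ρ` has Schmidt number at most `k` (in particular it is positive semidefinite):
it is a finite nonnegative combination of rank-one projections onto vectors of
Schmidt rank at most `k`. -/
def SchmidtNumberLE {I J : Type*} [Fintype I] [Fintype J] (k : ℕ)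
    (ρ : Matrix (I × J) (I × J) ℂ) : Prop :=
  ∃ (N : ℕ) (c : Fin N → ℝ) (v : Fin N → (I × J → ℂ)),
    (∀ i, 0 ≤ c i) ∧ (∀ i, SchmidtRank (v i) ≤ k) ∧
    ρ = ∑ i, (c i : ℂ) • Matrix.vecMulVec (v i) (star (v i))

/-- `id_I ⊗ Φ` : the map applying `Φ` to the second tensor factor. -/
noncomputable def tensorId {I : Type*} [Fintype I] {a b : ℕ}
    (Φ : Matrix (Fin a) (Fin a) ℂ →ₗ[ℂ] Matrix (Fin b) (Fin b) ℂ)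
    (X : Matrix (I × Fin a) (I × Fin a) ℂ) : Matrix (I × Fin b) (I × Fin b) ℂ :=
  Matrix.of fun p q => Φ (Matrix.of fun s t => X (p.1, s) (q.1, t)) p.2 q.2

/-- The positive semidefinite square root (the definition removed from Mathlib, restored). -/
noncomputable def Matrix.PosSemidef.sqrt {n : Type*} [Fintype n] [DecidableEq n] {𝕜 : Type*}
    [RCLike 𝕜] {A : Matrix n n 𝕜} (hA : A.PosSemidef) : Matrix n n 𝕜 :=
  hA.1.eigenvectorUnitary.1 * Matrix.diagonal ((↑) ∘ (hA.1.eigenvalues · |>.sqrt)) *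
  (star hA.1.eigenvectorUnitary : Matrix n n 𝕜)

/-- The trace norm `‖X‖_tr = Tr √(X^* X)`. -/
noncomputable def trNorm {I : Type*} [Fintype I] [DecidableEq I] (X : Matrix I I ℂ) : ℝ :=
  ((Matrix.posSemidef_conjTranspose_mul_self X).sqrt).trace.re

/-! For unit vectors `v, w` put `vᵢ = (I ⊗ Aᵢ)^* v` and `wᵢ = (I ⊗ Bᵢ)^* w`, so that
`⟨v, ∑ (I ⊗ Aᵢ) X (I ⊗ Bᵢ)^* w⟩ = ∑ ⟨vᵢ, X wᵢ⟩`. Since `I ⊗ Aᵢ^*` factors through `ℂ^m ⊗ ℂ^k`,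
every `vᵢ`, `wᵢ` has Schmidt rank at most `k`, hence `|⟨vᵢ, X wᵢ⟩| ≤ ‖vᵢ‖ ‖wᵢ‖ ‖X‖_{S(k)}`.
The contractivity of the families gives `∑ ‖vᵢ‖² ≤ 1` and `∑ ‖wᵢ‖² ≤ 1`, and Cauchy–Schwarz
bounds `∑ ‖vᵢ‖ ‖wᵢ‖` by `1`. -/

open WithLp

local notation "‖" v "‖₂" => ‖(WithLp.toLp 2 v : EuclideanSpace ℂ _)‖

section InnerProduct

variable {I : Type*} [Fintype I]

lemma inprod_eq_inner (v w : I → ℂ) :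
    inprod v w = inner ℂ (toLp 2 v : EuclideanSpace ℂ I) (toLp 2 w) := by
  rw [EuclideanSpace.inner_toLp_toLp, dotProduct_comm]
  rfl

lemma inprod_self_eq_norm_sq (v : I → ℂ) : inprod v v = (‖v‖₂ : ℂ) ^ 2 := by
  rw [inprod_eq_inner]
  exact inner_self_eq_norm_sq_to_K _

lemma unitVec_iff_norm_eq_one {v : I → ℂ} : UnitVec v ↔ ‖v‖₂ = 1 := by
  rw [UnitVec, inprod_self_eq_norm_sq]
  norm_cast
  exact pow_eq_one_iff_of_nonneg (norm_nonneg _) two_ne_zero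

lemma norm_inprod_le (v w : I → ℂ) : ‖inprod v w‖ ≤ ‖v‖₂ * ‖w‖₂ := by
  rw [inprod_eq_inner]
  exact norm_inner_le_norm _ _

lemma inprod_smul_smul (c d : ℂ) (v w : I → ℂ) :
    inprod (c • v) (d • w) = (starRingEnd ℂ) c * d * inprod v w := by
  simp only [inprod_eq_inner, toLp_smul, inner_smul_left, inner_smul_right]
  ring

lemma inprod_sub_right (u v w : I → ℂ) : inprod u (v - w) = inprod u v - inprod u w := by
  simp only [inprod_eq_inner, toLp_sub, inner_sub_right]

lemma inprod_sum_right {ι : Type*} (s : Finset ι) (v : I → ℂ) (w : ι → I → ℂ) :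
    inprod v (∑ i ∈ s, w i) = ∑ i ∈ s, inprod v (w i) := by
  simp only [inprod_eq_inner, toLp_sum, inner_sum]

lemma inprod_mulVec_eq_inprod_conjTranspose_mulVec {J : Type*} [Fintype J]
    (M : Matrix I J ℂ) (v : I → ℂ) (w : J → ℂ) :
    inprod v (M *ᵥ w) = inprod (Mᴴ *ᵥ v) w := by
  change star v ⬝ᵥ (M *ᵥ w) = star (Mᴴ *ᵥ v) ⬝ᵥ w
  rw [dotProduct_mulVec, star_mulVec, conjTranspose_conjTranspose]

lemma sum_norm_sq_conjTranspose_mulVec_le {ι J : Type*} [Fintype ι] [Fintype J] [DecidableEq I]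
    (M : ι → Matrix I J ℂ) (hM : (1 - ∑ i, M i * (M i)ᴴ).PosSemidef) (v : I → ℂ) :
    ∑ i, ‖(M i)ᴴ *ᵥ v‖₂ ^ 2 ≤ ‖v‖₂ ^ 2 := by
  have h := hM.dotProduct_mulVec_nonneg v
  change 0 ≤ inprod v _ at h
  simp only [sub_mulVec, one_mulVec, sum_mulVec, ← mulVec_mulVec, inprod_sub_right,
    inprod_sum_right, inprod_mulVec_eq_inprod_conjTranspose_mulVec, inprod_self_eq_norm_sq] at h
  exact_mod_cast sub_nonneg.mp h

end InnerProduct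

section SchmidtRank

variable {I J K : Type*} [Fintype I] [Fintype J] [Fintype K]

lemma schmidtRank_le_card_right (v : I × J → ℂ) : SchmidtRank v ≤ Fintype.card J :=
  rank_le_card_width _

lemma schmidtRank_smul_le (c : ℂ) (v : I × J → ℂ) : SchmidtRank (c • v) ≤ SchmidtRank v := by
  classical
  have h : (Matrix.of fun i j => (c • v) (i, j)) =
      (c • (1 : Matrix I I ℂ)) * Matrix.of fun i j => v (i, j) := by
    rw [Matrix.smul_mul, Matrix.one_mul]
    rfl
  rw [SchmidtRank, SchmidtRank, h]
  exact rank_mul_le_right _ _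

lemma schmidtRank_one_kronecker_mulVec_le [DecidableEq I] (C : Matrix J K ℂ) (v : I × K → ℂ) :
    SchmidtRank (((1 : Matrix I I ℂ) ⊗ₖ C) *ᵥ v) ≤ SchmidtRank v := by
  have h : (Matrix.of fun i j => (((1 : Matrix I I ℂ) ⊗ₖ C) *ᵥ v) (i, j)) =
      (Matrix.of fun i j => v (i, j)) * Cᵀ := by
    ext i j
    simp [mulVec, dotProduct, mul_apply, kroneckerMap_apply, Fintype.sum_prod_type, one_apply,
      mul_comm]
  rw [SchmidtRank, SchmidtRank, h]
  exact rank_mul_le_left _ _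

end SchmidtRank

section SNorm

variable {I J : Type*} [Fintype I] [Fintype J]

lemma bddAbove_norm_inprod_mulVec (X : Matrix I I ℂ) :
    BddAbove {t : ℝ | ∃ v w, UnitVec v ∧ UnitVec w ∧ t = ‖inprod v (X *ᵥ w)‖} := by
  classical
  refine ⟨‖toEuclideanCLM (𝕜 := ℂ) X‖, ?_⟩
  rintro t ⟨v, w, hv, hw, rfl⟩
  rw [unitVec_iff_norm_eq_one] at hv hw
  calc ‖inprod v (X *ᵥ w)‖ ≤ ‖v‖₂ * ‖X *ᵥ w‖₂ := norm_inprod_le _ _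
    _ = ‖toEuclideanCLM (𝕜 := ℂ) X (toLp 2 w)‖ := by rw [hv, one_mul, toEuclideanCLM_toLp]
    _ ≤ ‖toEuclideanCLM (𝕜 := ℂ) X‖ * ‖w‖₂ := ContinuousLinearMap.le_opNorm _ _
    _ = ‖toEuclideanCLM (𝕜 := ℂ) X‖ := by rw [hw, mul_one]

lemma SNorm_nonneg (k : ℕ) (X : Matrix (I × J) (I × J) ℂ) : 0 ≤ SNorm k X :=
  Real.sSup_nonneg fun _ ⟨_, _, _, _, _, _, ht⟩ => ht ▸ norm_nonneg _

lemma unitVec_inv_norm_smul {v : I → ℂ} (hv : v ≠ 0) : UnitVec ((‖v‖₂ : ℂ)⁻¹ • v) := by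
  have h : ‖v‖₂ ≠ 0 := by simpa using hv
  rw [unitVec_iff_norm_eq_one, toLp_smul, norm_smul, norm_inv, Complex.norm_real, norm_norm,
    inv_mul_cancel₀ h]

lemma norm_inprod_mulVec_le_SNorm {k : ℕ} (X : Matrix (I × J) (I × J) ℂ) {v w : I × J → ℂ}
    (hv : SchmidtRank v ≤ k) (hw : SchmidtRank w ≤ k) :
    ‖inprod v (X *ᵥ w)‖ ≤ ‖v‖₂ * ‖w‖₂ * SNorm k X := by
  by_cases hv0 : v = 0
  · simp [hv0, inprod]
  by_cases hw0 : w = 0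
  · simp [hw0, inprod]
  set a := ‖v‖₂
  set b := ‖w‖₂
  have ha : 0 < a := by simpa [a] using hv0
  have hb : 0 < b := by simpa [b] using hw0
  have hscaled : a⁻¹ * b⁻¹ * ‖inprod v (X *ᵥ w)‖ ≤ SNorm k X := by
    refine le_csSup ((bddAbove_norm_inprod_mulVec X).mono ?_) ⟨(a : ℂ)⁻¹ • v, (b : ℂ)⁻¹ • w,
      unitVec_inv_norm_smul hv0, unitVec_inv_norm_smul hw0, (schmidtRank_smul_le _ _).trans hv,
      (schmidtRank_smul_le _ _).trans hw, ?_⟩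
    · exact fun t ⟨v, w, hv, hw, _, _, ht⟩ => ⟨v, w, hv, hw, ht⟩
    · rw [mulVec_smul, inprod_smul_smul, norm_mul, norm_mul, Complex.norm_conj, norm_inv,
        norm_inv, Complex.norm_real, Complex.norm_real, Real.norm_of_nonneg ha.le,
        Real.norm_of_nonneg hb.le]
  calc ‖inprod v (X *ᵥ w)‖ = a * b * (a⁻¹ * b⁻¹ * ‖inprod v (X *ᵥ w)‖) := by field_simp
    _ ≤ a * b * SNorm k X := by gcongr

end SNorm

lemma sum_mul_le_one_of_sum_sq_le_one {ι : Type*} (s : Finset ι) (f g : ι → ℝ)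
    (hf : ∑ i ∈ s, f i ^ 2 ≤ 1) (hg : ∑ i ∈ s, g i ^ 2 ≤ 1) : ∑ i ∈ s, f i * g i ≤ 1 := by
  have hCS := Finset.sum_mul_sq_le_sq_mul_sq s f g
  have hf0 : 0 ≤ ∑ i ∈ s, f i ^ 2 := by positivity
  have hg0 : 0 ≤ ∑ i ∈ s, g i ^ 2 := by positivity
  nlinarith

lemma norm_sum_inprod_mulVec_le_SNorm {ι I J : Type*} [Fintype ι] [Fintype I] [Fintype J]
    {k : ℕ} (X : Matrix (I × J) (I × J) ℂ) (v w : ι → I × J → ℂ)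
    (hv : ∀ i, SchmidtRank (v i) ≤ k) (hw : ∀ i, SchmidtRank (w i) ≤ k)
    (hv1 : ∑ i, ‖v i‖₂ ^ 2 ≤ 1) (hw1 : ∑ i, ‖w i‖₂ ^ 2 ≤ 1) :
    ‖∑ i, inprod (v i) (X *ᵥ w i)‖ ≤ SNorm k X :=
  calc ‖∑ i, inprod (v i) (X *ᵥ w i)‖ ≤ ∑ i, ‖inprod (v i) (X *ᵥ w i)‖ := norm_sum_le _ _
    _ ≤ ∑ i, ‖v i‖₂ * ‖w i‖₂ * SNorm k X :=
      Finset.sum_le_sum fun i _ => norm_inprod_mulVec_le_SNorm X (hv i) (hw i)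
    _ = (∑ i, ‖v i‖₂ * ‖w i‖₂) * SNorm k X := (Finset.sum_mul _ _ _).symm
    _ ≤ SNorm k X := mul_le_of_le_one_left (SNorm_nonneg k X)
        (sum_mul_le_one_of_sum_sq_le_one _ _ _ hv1 hw1)

lemma posSemidef_one_sub_sum_one_kronecker_mul_conjTranspose {ι I J K : Type*} [Fintype ι]
    [Fintype I] [DecidableEq I] [Fintype J] [Fintype K] [DecidableEq K]
    (A : ι → Matrix K J ℂ) (hA : (1 - ∑ i, A i * (A i)ᴴ).PosSemidef) :
    (1 - ∑ i, ((1 : Matrix I I ℂ) ⊗ₖ A i) * ((1 : Matrix I I ℂ) ⊗ₖ A i)ᴴ).PosSemidef := by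
  have h : 1 - ∑ i, ((1 : Matrix I I ℂ) ⊗ₖ A i) * ((1 : Matrix I I ℂ) ⊗ₖ A i)ᴴ =
      (1 : Matrix I I ℂ) ⊗ₖ (1 - ∑ i, A i * (A i)ᴴ) := by
    simp only [conjTranspose_kronecker, conjTranspose_one, ← mul_kronecker_mul, Matrix.one_mul]
    have hlin := map_sub (kroneckerBilinear (R := ℂ) (1 : Matrix I I ℂ)) 1 (∑ i, A i * (A i)ᴴ)
    rw [map_sum] at hlin
    simpa [kroneckerBilinear, kroneckerMapBilinear_apply_apply, one_kronecker_one] using hlin.symm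
  rw [h]
  exact PosSemidef.one.kronecker hA

theorem opNorm_le_SNorm_of_contractive_families_general (m n k N : ℕ)
    (X : Matrix (Fin m × Fin n) (Fin m × Fin n) ℂ)
    (A B : Fin N → Matrix (Fin k) (Fin n) ℂ)
    (hA : ((1 : Matrix (Fin k) (Fin k) ℂ) - ∑ i, A i * (A i)ᴴ).PosSemidef)
    (hB : ((1 : Matrix (Fin k) (Fin k) ℂ) - ∑ i, B i * (B i)ᴴ).PosSemidef) :
    opNorm (∑ i, ((1 : Matrix (Fin m) (Fin m) ℂ) ⊗ₖ A i) * X *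
      (((1 : Matrix (Fin m) (Fin m) ℂ) ⊗ₖ B i)ᴴ)) ≤ SNorm k X := by
  refine Real.sSup_le ?_ (SNorm_nonneg k X)
  rintro t ⟨v, w, hv, hw, rfl⟩
  have hSR : ∀ (C : Matrix (Fin k) (Fin n) ℂ) (u : Fin m × Fin k → ℂ),
      SchmidtRank (((1 : Matrix (Fin m) (Fin m) ℂ) ⊗ₖ C)ᴴ *ᵥ u) ≤ k := fun C u => by
    rw [conjTranspose_kronecker, conjTranspose_one]
    simpa using (schmidtRank_one_kronecker_mulVec_le _ u).trans (schmidtRank_le_card_right u)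
  have hsq : ∀ (C : Fin N → Matrix (Fin k) (Fin n) ℂ), (1 - ∑ i, C i * (C i)ᴴ).PosSemidef →
      ∀ u : Fin m × Fin k → ℂ, UnitVec u →
      ∑ i, ‖((1 : Matrix (Fin m) (Fin m) ℂ) ⊗ₖ C i)ᴴ *ᵥ u‖₂ ^ 2 ≤ 1 := fun C hC u hu => by
    simpa [unitVec_iff_norm_eq_one.mp hu] using sum_norm_sq_conjTranspose_mulVec_le _
      (posSemidef_one_sub_sum_one_kronecker_mul_conjTranspose C hC) u
  simp only [sum_mulVec, inprod_sum_right, ← mulVec_mulVec,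
    inprod_mulVec_eq_inprod_conjTranspose_mulVec (_ ⊗ₖ A _)]
  exact norm_sum_inprod_mulVec_le_SNorm X _ _ (fun _ => hSR _ _) (fun _ => hSR _ _)
    (hsq A hA v hv) (hsq B hB w hw)

/-- The '≤' direction of Theorem 3.1. -/
theorem opNorm_le_SNorm_of_contractive_families (m n k N : ℕ) (hm : 0 < m) (hn : 0 < n)
    (hk : 0 < k) (hkn : k ≤ n)
    (X : Matrix (Fin m × Fin n) (Fin m × Fin n) ℂ)
    (A B : Fin N → Matrix (Fin k) (Fin n) ℂ)
    (hA : ((1 : Matrix (Fin k) (Fin k) ℂ) - ∑ i, A i * (A i)ᴴ).PosSemidef)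
    (hB : ((1 : Matrix (Fin k) (Fin k) ℂ) - ∑ i, B i * (B i)ᴴ).PosSemidef) :
    opNorm (∑ i, ((1 : Matrix (Fin m) (Fin m) ℂ) ⊗ₖ A i) * X *
      (((1 : Matrix (Fin m) (Fin m) ℂ) ⊗ₖ B i)ᴴ)) ≤ SNorm k X :=
  opNorm_le_SNorm_of_contractive_families_general m n k N X A B hA hB
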